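/- Let φ : ℝ → (ℝ³ → ℝ³) satisfy φ 0 = id and the composition rule φ(2t−1) = φ(t) ∘ φ(t−1) = φ(t−1) ∘ φ(t) for all t ∈ [0,1]. Then for every s ∈ [−1,1], every n ≥ 1, and every level-n expansion list L = [s₁, s₂, …, s_{2ⁿ}] ∈ Ex(n, s), the composition φ(s₁) ∘ φ(s₂) ∘ ⋯ ∘ φ(s_{2ⁿ}) equals φ(s). In particular, taking s = 0, every level-n expansion of 0 composes to the identity map. -/

import Mathlib

/-- One-step expansion of a list of reals: each entry `x` is replaced by the two
entries `(x+1)/2` and `(x-1)/2`, placed in either order. -/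
inductive ExpandStep : List ℝ → List ℝ → Prop
  | nil : ExpandStep [] []
  | cons_lr (x : ℝ) {L L' : List ℝ} (h : ExpandStep L L') :
      ExpandStep (x :: L) ((x + 1) / 2 :: (x - 1) / 2 :: L')
  | cons_rl (x : ℝ) {L L' : List ℝ} (h : ExpandStep L L') :
      ExpandStep (x :: L) ((x - 1) / 2 :: (x + 1) / 2 :: L')

/-- `ExpandN n L L'` : `L'` is obtained from `L` by `n` successive one-step
expansions. -/
inductive ExpandN : ℕ → List ℝ → List ℝ → Prop
  | zero (L : List ℝ) : ExpandN 0 L L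
  | succ {n : ℕ} {L L' L'' : List ℝ} (h : ExpandN n L L') (h' : ExpandStep L' L'') :
      ExpandN (n + 1) L L''

/-- `Ex n s`: the set of lists obtainable from the singleton list `[s]` by `n`
successive one-step expansions. -/
def Ex (n : ℕ) (s : ℝ) : Set (List ℝ) := {L | ExpandN n [s] L}

/-! The composition rule at `t = (x + 1) / 2` reads `φ x = φ ((x + 1) / 2) ∘ φ ((x - 1) / 2)`
(in either order), which is exactly what one expansion step does to the factor `φ x`. Since
`[-1, 1]` is stable under `x ↦ (x ± 1) / 2`, every entry produced stays in the range where the rule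
applies, so the composed map is unchanged along the whole expansion of `[s]`. -/

open Set

section Expansion

variable {α : Type*} {φ : ℝ → α → α} {S : Set ℝ}

theorem ExpandStep.forall_mem (hS : ∀ x ∈ S, (x + 1) / 2 ∈ S ∧ (x - 1) / 2 ∈ S)
    {L L' : List ℝ} (h : ExpandStep L L') (hL : ∀ x ∈ L, x ∈ S) : ∀ x ∈ L', x ∈ S := by
  induction h with
  | nil => exact hL
  | cons_lr x _ ih | cons_rl x _ ih =>
    rw [List.forall_mem_cons] at hL
    have := hS x hL.1
    simp only [List.forall_mem_cons]
    tauto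

theorem ExpandN.forall_mem (hS : ∀ x ∈ S, (x + 1) / 2 ∈ S ∧ (x - 1) / 2 ∈ S)
    {n : ℕ} {L L' : List ℝ} (h : ExpandN n L L') (hL : ∀ x ∈ L, x ∈ S) : ∀ x ∈ L', x ∈ S := by
  induction h with
  | zero => exact hL
  | succ _ h' ih => exact h'.forall_mem hS (ih hL)

theorem ExpandStep.foldr_comp_map_eq
    (hsplit : ∀ x ∈ S, φ x = φ ((x + 1) / 2) ∘ φ ((x - 1) / 2) ∧
      φ x = φ ((x - 1) / 2) ∘ φ ((x + 1) / 2))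
    {L L' : List ℝ} (h : ExpandStep L L') (hL : ∀ x ∈ L, x ∈ S) :
    (L'.map φ).foldr (· ∘ ·) id = (L.map φ).foldr (· ∘ ·) id := by
  induction h with
  | nil => rfl
  | cons_lr x _ ih =>
    rw [List.forall_mem_cons] at hL
    simp only [List.map_cons, List.foldr_cons, ih hL.2, (hsplit x hL.1).1, Function.comp_assoc]
  | cons_rl x _ ih =>
    rw [List.forall_mem_cons] at hL
    simp only [List.map_cons, List.foldr_cons, ih hL.2, (hsplit x hL.1).2, Function.comp_assoc]

theorem ExpandN.foldr_comp_map_eq (hS : ∀ x ∈ S, (x + 1) / 2 ∈ S ∧ (x - 1) / 2 ∈ S)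
    (hsplit : ∀ x ∈ S, φ x = φ ((x + 1) / 2) ∘ φ ((x - 1) / 2) ∧
      φ x = φ ((x - 1) / 2) ∘ φ ((x + 1) / 2))
    {n : ℕ} {L L' : List ℝ} (h : ExpandN n L L') (hL : ∀ x ∈ L, x ∈ S) :
    (L'.map φ).foldr (· ∘ ·) id = (L.map φ).foldr (· ∘ ·) id := by
  induction h with
  | zero => rfl
  | succ h h' ih => exact (h'.foldr_comp_map_eq hsplit (h.forall_mem hS hL)).trans (ih hL)

end Expansion

theorem add_one_div_two_mem_Icc_and_sub_one_div_two_mem_Icc {x : ℝ} (hx : x ∈ Icc (-1 : ℝ) 1) :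
    (x + 1) / 2 ∈ Icc (-1 : ℝ) 1 ∧ (x - 1) / 2 ∈ Icc (-1 : ℝ) 1 := by
  obtain ⟨h₁, h₂⟩ := hx
  refine ⟨⟨?_, ?_⟩, ⟨?_, ?_⟩⟩ <;> linarith

theorem apply_eq_comp_of_comp_rule {α : Type*} {φ : ℝ → α → α}
    (hcomp : ∀ t ∈ Icc (0 : ℝ) 1,
      φ (2 * t - 1) = φ t ∘ φ (t - 1) ∧ φ (2 * t - 1) = φ (t - 1) ∘ φ t)
    {x : ℝ} (hx : x ∈ Icc (-1 : ℝ) 1) :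
    φ x = φ ((x + 1) / 2) ∘ φ ((x - 1) / 2) ∧ φ x = φ ((x - 1) / 2) ∘ φ ((x + 1) / 2) := by
  have ht : (x + 1) / 2 ∈ Icc (0 : ℝ) 1 := ⟨by linarith [hx.1], by linarith [hx.2]⟩
  have h := hcomp _ ht
  rwa [show 2 * ((x + 1) / 2) - 1 = x by ring, show (x + 1) / 2 - 1 = (x - 1) / 2 by ring] at h

theorem expansion_composes_to_endpoint_general
    (φ : ℝ → ((Fin 3 → ℝ) → (Fin 3 → ℝ)))
    (hcomp : ∀ t ∈ Set.Icc (0 : ℝ) 1,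
      φ (2 * t - 1) = φ t ∘ φ (t - 1) ∧ φ (2 * t - 1) = φ (t - 1) ∘ φ t) :
    ∀ s ∈ Set.Icc (-1 : ℝ) 1, ∀ n : ℕ, 1 ≤ n → ∀ L ∈ Ex n s,
      (L.map φ).foldr (· ∘ ·) id = φ s := by
  intro s hs n _ L hL
  simpa using ExpandN.foldr_comp_map_eq
    (fun _ => add_one_div_two_mem_Icc_and_sub_one_div_two_mem_Icc)
    (fun _ => apply_eq_comp_of_comp_rule hcomp) hL (by simpa using hs)

/-- **Binary-tree expansion identity (Eq. 16 and Eq. 17).** If `φ 0 = id` and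
`φ (2t−1) = φ t ∘ φ (t−1) = φ (t−1) ∘ φ t` for all `t ∈ [0,1]`, then for every
`s ∈ [−1,1]`, every `n ≥ 1`, and every level-`n` expansion list
`L = [s₁, …, s_{2ⁿ}] ∈ Ex n s`, the composition `φ s₁ ∘ φ s₂ ∘ ⋯ ∘ φ s_{2ⁿ}`
equals `φ s`; in particular every level-`n` expansion of `0` composes to the
identity map. -/
theorem expansion_composes_to_endpoint
    (φ : ℝ → ((Fin 3 → ℝ) → (Fin 3 → ℝ)))
    (h0 : φ 0 = id)
    (hcomp : ∀ t ∈ Set.Icc (0 : ℝ) 1,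
      φ (2 * t - 1) = φ t ∘ φ (t - 1) ∧ φ (2 * t - 1) = φ (t - 1) ∘ φ t) :
    ∀ s ∈ Set.Icc (-1 : ℝ) 1, ∀ n : ℕ, 1 ≤ n → ∀ L ∈ Ex n s,
      (L.map φ).foldr (· ∘ ·) id = φ s :=
  expansion_composes_to_endpoint_general φ hcomp
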